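/- arXiv:2306.16331 — 4 statements merged into one kernel-verified Lean document; each statement's English description precedes it below -/
import Mathlib

section
/- The linearly ordered set ℚ of rational numbers with its usual order is ultrahomogeneous: every order isomorphism between two finite subsets of ℚ extends to an order automorphism of ℚ. -/
/-!
ℚ is a countable dense linear order without endpoints. For two such orders, Cantor's
back-and-forth argument extends any finite partial isomorphism to a total one: enumerate both
orders and alternately add the next point of the domain and of the codomain, which density and
the absence of endpoints always allow.
-/

namespace Order

variable {α β : Type*} [LinearOrder α] [LinearOrder β]

def PartialIso.graph (s : Finset α) (f : α → β) (hf : StrictMonoOn f s) : PartialIso α β :=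
  ⟨s.image fun x ↦ (x, f x), by
    simp only [Finset.mem_image]
    rintro _ ⟨x, hx, rfl⟩ _ ⟨y, hy, rfl⟩
    exact (hf.cmp_map_eq hx hy).symm⟩

variable [Countable α] [DenselyOrdered α] [NoMinOrder α] [NoMaxOrder α] [Nonempty α]
  [Countable β] [DenselyOrdered β] [NoMinOrder β] [NoMaxOrder β] [Nonempty β]

/-- The proof of `Order.iso_of_countable_dense`, started from `f₀` instead of from the empty
partial isomorphism. -/
theorem PartialIso.exists_orderIso_extending (f₀ : PartialIso α β) :
    ∃ g : α ≃o β, ∀ p ∈ f₀.val, g p.1 = p.2 := by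
  cases nonempty_encodable α
  cases nonempty_encodable β
  let cofinals : α ⊕ β → Cofinal (PartialIso α β) := fun p ↦
    Sum.recOn p (definedAtLeft β) (definedAtRight α)
  let I : Ideal (PartialIso α β) := idealOfCofinals f₀ cofinals
  let F a := funOfIdeal a I (cofinal_meets_idealOfCofinals _ cofinals (Sum.inl a))
  let G b := invOfIdeal b I (cofinal_meets_idealOfCofinals _ cofinals (Sum.inr b))
  refine ⟨OrderIso.ofCmpEqCmp (fun a ↦ (F a).val) (fun b ↦ (G b).val) fun a b ↦ ?_, ?_⟩
  · obtain ⟨f, hf, ha⟩ := (F a).prop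
    obtain ⟨g, hg, hb⟩ := (G b).prop
    obtain ⟨m, -, fm, gm⟩ := I.directed _ hf _ hg
    exact m.prop (a, _) (fm ha) (_, b) (gm hb)
  · rintro ⟨a, b⟩ hab
    obtain ⟨f, hf, ha⟩ := (F a).prop
    obtain ⟨m, -, fm, f₀m⟩ := I.directed _ hf _ (mem_idealOfCofinals f₀ cofinals)
    have hcmp : cmp a a = cmp (F a).val b := m.prop (a, _) (fm ha) (a, b) (f₀m hab)
    exact (cmp_eq_eq_iff _ _).mp (hcmp.symm.trans (cmp_self_eq_eq a))

theorem _root_.StrictMonoOn.exists_orderIso_eqOn {s : Finset α} {f : α → β}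
    (hf : StrictMonoOn f s) : ∃ g : α ≃o β, Set.EqOn g f s := by
  obtain ⟨g, hg⟩ := (PartialIso.graph s f hf).exists_orderIso_extending
  exact ⟨g, fun x hx ↦ hg (x, f x) (Finset.mem_image_of_mem _ hx)⟩

end Order

/-- ℚ is ultrahomogeneous: every order-preserving map on a finite subset of ℚ
extends to an order automorphism of ℚ. -/
theorem rat_ultrahomogeneous (s : Finset ℚ) (f : ℚ → ℚ)
    (hf : ∀ x ∈ s, ∀ y ∈ s, x < y → f x < f y) :
    ∃ g : ℚ ≃o ℚ, ∀ x ∈ s, g x = f x :=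
  StrictMonoOn.exists_orderIso_eqOn hf
end

section
/- For any two finite tuples of rationals q⃗₁ and q⃗₂ of the same length with the same order type (q₁ᵢ < q₁ⱼ ↔ q₂ᵢ < q₂ⱼ and q₁ᵢ = q₁ⱼ ↔ q₂ᵢ = q₂ⱼ for all i,j), there exists a boundedly additive order automorphism of ℚ mapping q⃗₁ onto q⃗₂ componentwise. -/
/-- An order automorphism of ℚ is boundedly additive if, outside a closed bounded interval
`[q₁,r₁]` mapped onto `[q₂,r₂]`, it acts by addition of constants. -/
def BoundedlyAdditive (α : ℚ ≃o ℚ) : Prop :=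
  ∃ q₁ r₁ q₂ r₂ : ℚ, q₁ ≤ r₁ ∧ q₂ ≤ r₂ ∧
    α '' Set.Icc q₁ r₁ = Set.Icc q₂ r₂ ∧
    (∀ p, p < q₁ → α p = p + q₂ - q₁) ∧
    (∀ p, r₁ < p → α p = p + r₂ - r₁)

/-!
An automorphism is boundedly additive exactly when it is a translation near `-∞` and near `+∞`,
so these automorphisms are closed under composition. Given points `x₁ < ⋯ < xₖ` with strictly
increasing targets `f xᵢ`, extend a boundedly additive `α` matching the first `k - 1` points by
postcomposing it with the piecewise linear map that fixes everything up to some `c` with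
`f xₖ₋₁ ≤ c < min (α xₖ) (f xₖ)`, maps `[c, α xₖ]` affinely onto `[c, f xₖ]`, and is a
translation beyond `α xₖ`.
-/

open Filter Set

theorem boundedlyAdditive_iff {α : ℚ ≃o ℚ} :
    BoundedlyAdditive α ↔
      (∃ d, ∀ᶠ p in atBot, α p = p + d) ∧ ∃ e, ∀ᶠ p in atTop, α p = p + e := by
  simp only [eventually_atBot, eventually_atTop]
  constructor
  · rintro ⟨q₁, r₁, q₂, r₂, -, -, -, hlo, hhi⟩
    refine ⟨⟨q₂ - q₁, q₁ - 1, fun p hp => ?_⟩, ⟨r₂ - r₁, r₁ + 1, fun p hp => ?_⟩⟩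
    · rw [hlo p (by linarith)]; ring
    · rw [hhi p (by linarith)]; ring
  · rintro ⟨⟨d, u, hu⟩, ⟨e, v, hv⟩⟩
    have huv : min u v ≤ v := min_le_right u v
    refine ⟨min u v, v, α (min u v), α v, huv, α.monotone huv, α.image_Icc _ _,
      fun p hp => ?_, fun p hp => ?_⟩
    · rw [hu p (hp.le.trans (min_le_left u v)), hu _ (min_le_left u v)]; ring
    · rw [hv p hp.le, hv v le_rfl]; ring

theorem boundedlyAdditive_refl : BoundedlyAdditive (OrderIso.refl ℚ) :=
  boundedlyAdditive_iff.2 ⟨⟨0, by simp⟩, ⟨0, by simp⟩⟩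

theorem BoundedlyAdditive.trans {α β : ℚ ≃o ℚ} (hα : BoundedlyAdditive α)
    (hβ : BoundedlyAdditive β) : BoundedlyAdditive (α.trans β) := by
  rw [boundedlyAdditive_iff] at *
  obtain ⟨⟨d, hd⟩, ⟨e, he⟩⟩ := hα
  obtain ⟨⟨d', hd'⟩, ⟨e', he'⟩⟩ := hβ
  refine ⟨⟨d + d', ?_⟩, ⟨e + e', ?_⟩⟩
  · filter_upwards [hd, α.tendsto_atBot.eventually hd'] with p hp hp'
    rw [α.trans_apply, hp', hp, add_assoc]
  · filter_upwards [he, α.tendsto_atTop.eventually he'] with p hp hp'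
    rw [α.trans_apply, hp', hp, add_assoc]

section Stretch

variable {c a b x : ℚ}

def stretch (c a b x : ℚ) : ℚ :=
  if x ≤ c then x else if x ≤ a then c + (b - c) / (a - c) * (x - c) else x + (b - a)

theorem stretch_of_le (hx : x ≤ c) : stretch c a b x = x := if_pos hx

theorem stretch_of_mem_Icc (hx : x ∈ Icc c a) :
    stretch c a b x = c + (b - c) / (a - c) * (x - c) := by
  rcases hx.1.eq_or_lt with rfl | hcx
  · simp [stretch]
  · simp [stretch, hcx.not_ge, hx.2]

theorem stretch_of_ge (hca : c < a) (hx : a ≤ x) : stretch c a b x = x + (b - a) := by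
  rcases hx.eq_or_lt with rfl | hax
  · rw [stretch_of_mem_Icc ⟨hca.le, le_rfl⟩, div_mul_cancel₀ _ (sub_ne_zero.2 hca.ne')]
    ring
  · simp [stretch, (hca.trans hax).not_ge, hax.not_ge]

theorem stretch_right (hca : c < a) : stretch c a b a = b := by
  rw [stretch_of_ge hca le_rfl]; ring

theorem strictMono_stretch (hca : c < a) (hcb : c < b) : StrictMono (stretch c a b) := by
  have hslope : 0 < (b - c) / (a - c) := div_pos (sub_pos.2 hcb) (sub_pos.2 hca)
  refine StrictMonoOn.Iic_union_Ici (a := c) (fun x hx y hy hxy => ?_) ?_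
  · rwa [stretch_of_le hx, stretch_of_le hy]
  rw [← Icc_union_Ici_eq_Ici hca.le]
  refine StrictMonoOn.union (fun x hx y hy hxy => ?_) (fun x hx y hy hxy => ?_)
    (isGreatest_Icc hca.le) isLeast_Ici
  · rw [stretch_of_mem_Icc hx, stretch_of_mem_Icc hy]; gcongr
  · rw [stretch_of_ge hca hx, stretch_of_ge hca hy]; gcongr

theorem mapsTo_stretch (hca : c < a) (hcb : c < b) : MapsTo (stretch c a b) (Icc c a) (Icc c b) :=
  fun _ hx => by
    simpa only [stretch_of_le le_rfl, stretch_right hca] using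
      (strictMono_stretch hca hcb).monotone.mapsTo_Icc hx

theorem stretch_rightInverse (hca : c < a) (hcb : c < b) :
    Function.RightInverse (stretch c b a) (stretch c a b) := by
  intro x
  rcases le_total x c with hxc | hcx
  · rw [stretch_of_le hxc, stretch_of_le hxc]
  rcases le_total x b with hxb | hbx
  · have hx : x ∈ Icc c b := ⟨hcx, hxb⟩
    rw [stretch_of_mem_Icc (mapsTo_stretch hcb hca hx), stretch_of_mem_Icc hx]
    field_simp [sub_ne_zero.2 hca.ne', sub_ne_zero.2 hcb.ne']
    ring
  · rw [stretch_of_ge hcb hbx, stretch_of_ge hca (by linarith)]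
    ring

noncomputable def stretchIso (hca : c < a) (hcb : c < b) : ℚ ≃o ℚ :=
  (strictMono_stretch hca hcb).orderIsoOfRightInverse _ _ (stretch_rightInverse hca hcb)

theorem stretchIso_apply (hca : c < a) (hcb : c < b) (x : ℚ) :
    stretchIso hca hcb x = stretch c a b x := rfl

theorem boundedlyAdditive_stretchIso (hca : c < a) (hcb : c < b) :
    BoundedlyAdditive (stretchIso hca hcb) := by
  simp only [boundedlyAdditive_iff, eventually_atBot, eventually_atTop, stretchIso_apply]
  exact ⟨⟨0, c, fun x hx => by rw [stretch_of_le hx, add_zero]⟩,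
    ⟨b - a, a, fun x hx => stretch_of_ge hca hx⟩⟩

end Stretch

theorem Finset.exists_le_of_forall_lt {α : Type*} [LinearOrder α] [NoMinOrder α]
    (s : Finset α) {m : α} (hs : ∀ x ∈ s, x < m) : ∃ c < m, ∀ x ∈ s, x ≤ c := by
  obtain ⟨m', hm'⟩ := exists_lt m
  refine ⟨(insert m' s).max' (insert_nonempty m' s), ?_,
    fun x hx => le_max' _ _ (mem_insert_of_mem hx)⟩
  rw [max'_lt_iff]
  simpa [hm'] using hs

theorem exists_boundedlyAdditive_eqOn (f : ℚ → ℚ) (s : Finset ℚ) (hf : StrictMonoOn f s) :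
    ∃ α : ℚ ≃o ℚ, BoundedlyAdditive α ∧ ∀ x ∈ s, α x = f x := by
  induction s using Finset.induction_on_max with
  | empty => exact ⟨OrderIso.refl ℚ, boundedlyAdditive_refl, by simp⟩
  | insert a s hlt ih =>
    obtain ⟨α, hα, hαf⟩ := ih (hf.mono (by simp))
    have hbound : ∀ y ∈ s.image f, y < min (α a) (f a) := by
      simp only [Finset.mem_image, lt_min_iff]
      rintro _ ⟨x, hx, rfl⟩
      exact ⟨hαf x hx ▸ α.strictMono (hlt x hx), hf (by simp [hx]) (by simp) (hlt x hx)⟩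
    obtain ⟨c, hcm, hc⟩ := (s.image f).exists_le_of_forall_lt hbound
    have hca : c < α a := hcm.trans_le (min_le_left _ _)
    have hcb : c < f a := hcm.trans_le (min_le_right _ _)
    refine ⟨α.trans (stretchIso hca hcb), hα.trans (boundedlyAdditive_stretchIso hca hcb), ?_⟩
    simp only [Finset.forall_mem_insert, OrderIso.trans_apply, stretchIso_apply]
    refine ⟨stretch_right hca, fun x hx => ?_⟩
    rw [hαf x hx, stretch_of_le (hc _ (Finset.mem_image_of_mem f hx))]

theorem boundedlyAdditive_transitive_on_tuples_general {n : ℕ} (q₁ q₂ : Fin n → ℚ)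
    (hlt : ∀ i j, q₁ i < q₁ j ↔ q₂ i < q₂ j) :
    ∃ α : ℚ ≃o ℚ, BoundedlyAdditive α ∧ ∀ i, α (q₁ i) = q₂ i := by
  have hfactor : q₂.FactorsThrough q₁ := fun i j h =>
    le_antisymm (not_lt.1 fun h' => ((hlt j i).2 h').ne h.symm)
      (not_lt.1 fun h' => ((hlt i j).2 h').ne h)
  have hf : ∀ i, Function.extend q₁ q₂ 0 (q₁ i) = q₂ i := hfactor.extend_apply 0
  have hmono : StrictMonoOn (Function.extend q₁ q₂ 0) (Finset.univ.image q₁) := by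
    simp only [Finset.coe_image, Finset.coe_univ, image_univ]
    rintro _ ⟨i, rfl⟩ _ ⟨j, rfl⟩ hij
    rw [hf, hf]
    exact (hlt i j).1 hij
  obtain ⟨α, hα, hαf⟩ := exists_boundedlyAdditive_eqOn _ _ hmono
  exact ⟨α, hα, fun i => (hαf _ (Finset.mem_image_of_mem q₁ (Finset.mem_univ i))).trans (hf i)⟩

/-- Any two finite tuples of rationals with the same order type are related by a boundedly
additive order automorphism of ℚ. -/
theorem boundedlyAdditive_transitive_on_tuples {n : ℕ} (q₁ q₂ : Fin n → ℚ)
    (hlt : ∀ i j, q₁ i < q₁ j ↔ q₂ i < q₂ j)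
    (heq : ∀ i j, q₁ i = q₁ j ↔ q₂ i = q₂ j) :
    ∃ α : ℚ ≃o ℚ, BoundedlyAdditive α ∧ ∀ i, α (q₁ i) = q₂ i :=
  boundedlyAdditive_transitive_on_tuples_general q₁ q₂ hlt
end

section
/- Every commutative integral domain R that (i) is integral over its prime subring, (ii) has characteristic zero, and (iii) is algebraically closed with respect to monic polynomials (every monic polynomial over R has a root in R), is isomorphic as a ring to the ring of algebraic integers, i.e. the integral closure of ℤ in an algebraic closure of ℚ. -/
open Polynomial

private lemma monic_splits_aux (R : Type*) [CommRing R] [IsDomain R]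
    (hroot : ∀ f : Polynomial R, f.Monic → 0 < f.natDegree → ∃ x : R, f.eval x = 0) :
    ∀ (n : ℕ) (f : R[X]), f.Monic → f.natDegree = n →
      ∃ s : Multiset R, f = (s.map fun a => X - C a).prod := by
  intro n
  induction n with
  | zero =>
    intro f hf hd
    refine ⟨0, ?_⟩
    simp [hf.natDegree_eq_zero.mp hd]
  | succ n ih =>
    intro f hf hd
    obtain ⟨x, hx⟩ := hroot f hf (by omega)
    obtain ⟨g, hg⟩ := dvd_iff_isRoot.mpr hx
    have hm : g.Monic := by
      have h2 := hf
      rw [hg] at h2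
      exact (monic_X_sub_C x).of_mul_monic_left h2
    have hdg : g.natDegree = n := by
      have h3 : f.natDegree = (X - C x).natDegree + g.natDegree := by
        rw [hg]; exact (monic_X_sub_C x).natDegree_mul hm
      rw [natDegree_X_sub_C] at h3
      omega
    obtain ⟨s, hs⟩ := ih g hm hdg
    exact ⟨x ::ₘ s, by rw [Multiset.map_cons, Multiset.prod_cons, hg, hs]⟩

/-- Every integral domain of characteristic zero which is integral over its prime subring and in
which every nonconstant monic polynomial has a root is isomorphic to the ring of algebraic
integers, i.e. the integral closure of ℤ in an algebraic closure of ℚ. -/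
theorem algebraic_integers_characterization (R : Type*) [CommRing R] [IsDomain R] [CharZero R]
    (hint : ∀ x : R, IsIntegral ℤ x)
    (hroot : ∀ f : Polynomial R, f.Monic → 0 < f.natDegree → ∃ x : R, f.eval x = 0) :
    Nonempty (R ≃+* integralClosure ℤ (AlgebraicClosure ℚ)) := by
  haveI : Algebra.IsIntegral ℤ R := ⟨hint⟩
  haveI : Algebra.IsAlgebraic ℤ R := ⟨fun x => (hint x).isAlgebraic⟩
  let φ : R →ₐ[ℤ] AlgebraicClosure ℚ := IsAlgClosed.lift
  -- injectivity
  have hinj : Function.Injective φ := by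
    have hker : RingHom.ker (φ : R →+* AlgebraicClosure ℚ) = ⊥ := by
      by_contra h
      have hb : (RingHom.ker (φ : R →+* AlgebraicClosure ℚ)).comap (algebraMap ℤ R) = ⊥ := by
        ext n
        simp only [Ideal.mem_comap, RingHom.mem_ker, Ideal.mem_bot]
        constructor
        · intro hn
          have h2 : (algebraMap ℤ (AlgebraicClosure ℚ)) n = 0 := (φ.commutes n) ▸ hn
          simpa using h2
        · rintro rfl; simp
      exact h (Ideal.eq_bot_of_comap_eq_bot hb)
    exact (RingHom.injective_iff_ker_eq_bot _).mpr hker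
  -- surjectivity onto algebraic integers
  have hrange : ∀ y : AlgebraicClosure ℚ, IsIntegral ℤ y → ∃ x : R, φ x = y := by
    intro y hy
    obtain ⟨p, hp, hpy⟩ := hy
    obtain ⟨s, hs⟩ := monic_splits_aux R hroot (p.map (Int.castRingHom R)).natDegree
      (p.map (Int.castRingHom R)) (hp.map _) rfl
    have hmap : (p.map (Int.castRingHom R)).map (φ : R →+* AlgebraicClosure ℚ)
        = p.map (Int.castRingHom (AlgebraicClosure ℚ)) := by
      rw [Polynomial.map_map]
      congr 1
      ext n
      simp
    have hy0 : ((p.map (Int.castRingHom R)).map (φ : R →+* AlgebraicClosure ℚ)).eval y = 0 := by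
      rw [hmap, eval_map]
      have : (Int.castRingHom (AlgebraicClosure ℚ)) = algebraMap ℤ (AlgebraicClosure ℚ) := by
        ext n; simp
      rw [this]
      exact hpy
    rw [hs, Polynomial.map_multiset_prod, Multiset.map_map, eval_multiset_prod,
      Multiset.map_map] at hy0
    have h0 := Multiset.prod_eq_zero_iff.mp hy0
    obtain ⟨a, ha, ha0⟩ := Multiset.mem_map.mp h0
    simp only [Function.comp_apply, Polynomial.map_sub, map_X, map_C, eval_sub, eval_X,
      eval_C] at ha0
    exact ⟨a, (sub_eq_zero.mp ha0).symm⟩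
  -- build the equivalence
  have hmem : ∀ x : R, φ x ∈ integralClosure ℤ (AlgebraicClosure ℚ) := fun x => (hint x).map φ
  let ψ : R →ₐ[ℤ] integralClosure ℤ (AlgebraicClosure ℚ) := φ.codRestrict _ hmem
  refine ⟨RingEquiv.ofBijective (ψ : R →+* integralClosure ℤ (AlgebraicClosure ℚ)) ⟨?_, ?_⟩⟩
  · intro a b hab
    apply hinj
    exact congrArg Subtype.val hab
  · rintro ⟨y, hy⟩
    obtain ⟨x, hx⟩ := hrange y hy
    exact ⟨x, Subtype.ext hx⟩
end

section
/- Let Z̄ be the ring of algebraic integers and M a maximal ideal of Z̄ containing a prime number p. Then the quotient field Z̄/M is an algebraic closure of its prime subfield 𝔽_p; in particular Z̄/M is an algebraically closed field of characteristic p in which every element is algebraic over 𝔽_p. -/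
/-- The ring of algebraic integers: the integral closure of ℤ in an algebraic closure of ℚ. -/
def Zbar : Type := integralClosure ℤ (AlgebraicClosure ℚ)

noncomputable instance : CommRing Zbar :=
  inferInstanceAs (CommRing (integralClosure ℤ (AlgebraicClosure ℚ)))

noncomputable instance : Algebra Zbar (AlgebraicClosure ℚ) :=
  inferInstanceAs (Algebra (integralClosure ℤ (AlgebraicClosure ℚ)) (AlgebraicClosure ℚ))

/-- If `M` is a maximal ideal of the ring of algebraic integers containing a prime `p`, then the
quotient `Zbar ⧸ M` is an algebraically closed field of characteristic `p` every element of
which is algebraic over the prime subfield (equivalently, over ℤ). -/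
theorem quotient_by_maximal_isAlgClosure (M : Ideal Zbar) [hM : M.IsMaximal]
    (p : ℕ) (hp : p.Prime) (hpM : (p : Zbar) ∈ M) :
    letI : Field (Zbar ⧸ M) := Ideal.Quotient.field M
    IsAlgClosed (Zbar ⧸ M) ∧ CharP (Zbar ⧸ M) p ∧ ∀ x : Zbar ⧸ M, IsAlgebraic ℤ x := by
  letI : Field (Zbar ⧸ M) := Ideal.Quotient.field M
  set K := AlgebraicClosure ℚ
  have hsurj : Function.Surjective (Ideal.Quotient.mk M) := Ideal.Quotient.mk_surjective
  refine ⟨?_, ?_, ?_⟩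
  · apply IsAlgClosed.of_exists_root
    intro q hqm hqirr
    -- lift q to a monic polynomial over Zbar
    have hq : q ∈ Polynomial.lifts (Ideal.Quotient.mk M) := by
      rw [Polynomial.lifts_iff_coeff_lifts]
      intro n
      exact hsurj _
    obtain ⟨Q, hQmap, hQdeg, hQmonic⟩ := Polynomial.lifts_and_degree_eq_and_monic hq hqm
    -- find a root in the algebraic closure
    have hQdegpos : 0 < (Q.map (algebraMap Zbar K)).degree := by
      rw [Polynomial.degree_map_eq_of_leadingCoeff_ne_zero]
      · rw [hQdeg]
        exact Polynomial.degree_pos_of_irreducible hqirr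
      · rw [hQmonic.leadingCoeff, map_one]
        exact one_ne_zero
    obtain ⟨z, hz⟩ := IsAlgClosed.exists_root (k := K) (Q.map (algebraMap Zbar K))
      (fun h => by simp [h] at hQdegpos)
    rw [Polynomial.IsRoot, Polynomial.eval_map, ← Polynomial.aeval_def] at hz
    -- z is integral over ℤ, hence lies in Zbar
    have hzint : IsIntegral (integralClosure ℤ K) z := ⟨Q, hQmonic, hz⟩
    have hzZ : IsIntegral ℤ z := isIntegral_trans z hzint
    set w : Zbar := (⟨z, hzZ⟩ : integralClosure ℤ K)
    refine ⟨Ideal.Quotient.mk M w, ?_⟩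
    have hQw : Q.eval w = 0 := by
      have : algebraMap Zbar K (Q.eval w) = 0 := by
        rw [← Polynomial.eval₂_at_apply, ← Polynomial.eval_map]
        rw [Polynomial.aeval_def, Polynomial.eval₂_eq_eval_map] at hz
        exact hz
      exact (map_eq_zero_iff _ Subtype.val_injective).mp this
    have := congrArg (Ideal.Quotient.mk M) hQw
    rwa [← Polynomial.eval₂_at_apply, ← Polynomial.eval_map, hQmap, map_zero] at this
  · have hp0 : (p : Zbar ⧸ M) = 0 := by
      rw [← map_natCast (Ideal.Quotient.mk M), Ideal.Quotient.eq_zero_iff_mem]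
      exact hpM
    exact (CharP.charP_iff_prime_eq_zero hp).mpr hp0
  · intro x
    obtain ⟨y, rfl⟩ := hsurj x
    have hy : IsIntegral ℤ y := integralClosure.isIntegral (R := ℤ) (A := K) y
    exact ((hy.map (Ideal.Quotient.mkₐ ℤ M))).isAlgebraic
end
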